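/- Let (V,Q₁) be a metric vector space with V^{⊥₁} = {0}, and suppose that neither (dim V = 1 and |F| = 3) nor (dim V = 2 and |F| = 2) holds. If a quadratic form Q₂ : V → F satisfies O(V,Q₁) = O(V,Q₂) or O(V,Q₁) = O'(V,Q₂), then Q₁ = c·Q₂ for some c ∈ F^×. -/

import Mathlib

/-! Setting: a field `F`, a finite-dimensional `F`-vector space `V`, a quadratic form
`Q : V → F` with polar form `B = QuadraticMap.polar Q` (the bilinear map `Q.polarBilin`),
induced map `D = Q.polarBilin : V →ₗ[F] Module.Dual F V`, and radical
`V^⊥ = LinearMap.ker Q.polarBilin`. -/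

variable {F V : Type*} [Field F] [AddCommGroup V] [Module F V] [FiniteDimensional F V]

/-- The map `δ_{c*,f} : x ↦ x + ⟨c*,x⟩ • f`. -/
def deltaMap (c : Module.Dual F V) (f : V) : V →ₗ[F] V :=
  LinearMap.id + c.smulRight f

/-- The orthogonal group `O(V,Q)`, as a set of linear endomorphisms. -/
def orthSet (Q : QuadraticForm F V) : Set (V →ₗ[F] V) :=
  {φ | Function.Bijective φ ∧ ∀ x, Q (φ x) = Q x}

/-- The weak orthogonal group `O'(V,Q)`: isometries fixing the radical elementwise. -/
def wOrthSet (Q : QuadraticForm F V) : Set (V →ₗ[F] V) :=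
  {φ | Function.Bijective φ ∧ (∀ x, Q (φ x) = Q x) ∧
    ∀ x ∈ LinearMap.ker Q.polarBilin, φ x = x}

/-- The group `Δ(V,f) = {δ_{a*,f} : a* ∈ V*, ⟨a*,f⟩ ≠ -1}`. -/
def deltaSet (f : V) : Set (V →ₗ[F] V) :=
  {φ | ∃ a : Module.Dual F V, a f ≠ -1 ∧ φ = deltaMap a f}

/-- The `Q`-reflection `ξ_r : x ↦ x - Q(r)⁻¹ • B(r,x) • r` in the direction of `r`. -/
noncomputable def xiMap (Q : QuadraticForm F V) (r : V) : V →ₗ[F] V :=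
  LinearMap.id - (Q r)⁻¹ • (Q.polarBilin r).smulRight r

/-!
For `Q₁ f ≠ 0` the `Q₁`-reflection `ξ_f = δ_{c*,f}` lies in `O(V,Q₁)` and so preserves `Q₂`; as a
product of two linear forms vanishes only if one of them does, this forces
`B₂(f,·) = (Q₂ f / Q₁ f) • B₁(f,·)`. Outside the two excluded cases the anisotropic vectors of `Q₁`
span `V`, so a vector `B₁`-orthogonal to all of them is zero.

If `Q₂ f = 0` for such an `f`, then `f` lies in the radical of `Q₂`. If `O(V,Q₁) = O(V,Q₂)`, the
whole group `Δ(V,f)` then consists of `Q₁`-isometries, whereas only `id` and `ξ_f` in it are; this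
leaves room only for the excluded small cases. If `O(V,Q₁) = O'(V,Q₂)`, the map `ξ_f` has to fix the
radical of `Q₂`, which makes `f` orthogonal to every anisotropic vector. Similarly, the
`Q₂`-reflection in a `Q₁`-isotropic vector `v` is a `Q₁`-isometry, whence `Q₂ v = 0`. Finally
`Q₂ / Q₁` is constant on anisotropic vectors `p`, `q`: compare `B₂(p + q, ·)` with
`B₂(p, ·) + B₂(q, ·)` using nondegeneracy, or expand `Q₂(p + q) = 0` if `p + q` is isotropic.
-/

open QuadraticMap Module

lemma LinearMap.eq_zero_or_eq_zero_of_forall_mul_eq_zero {R M : Type*} [Semiring R]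
    [NoZeroDivisors R] [AddCommMonoid M] [Module R M] {a c : M →ₗ[R] R}
    (h : ∀ x, a x * c x = 0) : a = 0 ∨ c = 0 := by
  by_contra! hac
  obtain ⟨x, hx⟩ : ∃ x, a x ≠ 0 := by simpa [LinearMap.ext_iff] using hac.1
  obtain ⟨y, hy⟩ : ∃ y, c y ≠ 0 := by simpa [LinearMap.ext_iff] using hac.2
  have hcx : c x = 0 := (mul_eq_zero.mp (h x)).resolve_left hx
  have hay : a y = 0 := (mul_eq_zero.mp (h y)).resolve_right hy
  have hxy := h (x + y)
  rw [map_add, map_add, hcx, hay, zero_add, add_zero] at hxy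
  exact mul_ne_zero hx hy hxy

section

variable {K W : Type*} [Field K] [AddCommGroup W] [Module K W]

lemma deltaMap_apply (a : Dual K W) (f x : W) : deltaMap a f x = x + a x • f := rfl

lemma deltaMap_deltaMap_apply (a b : Dual K W) (f x : W) :
    deltaMap b f (deltaMap a f x) = x + (a x + b x + a x * b f) • f := by
  simp only [deltaMap_apply, map_add, map_smul]
  module

lemma deltaMap_bijective {a : Dual K W} {f : W} (h : a f ≠ -1) :
    Function.Bijective (deltaMap a f) := by
  have h1 : 1 + a f ≠ 0 := fun h0 => h (eq_neg_of_add_eq_zero_right h0)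
  set b : Dual K W := -(1 + a f)⁻¹ • a
  have hb : ∀ x, b x = -(1 + a f)⁻¹ * a x := fun x => rfl
  refine Function.bijective_iff_has_inverse.mpr ⟨deltaMap b f, fun x => ?_, fun x => ?_⟩
  all_goals
    rw [deltaMap_deltaMap_apply, add_eq_left, smul_eq_zero]
    left
    simp only [hb]
    field_simp
    ring

lemma map_deltaMap_apply (Q : QuadraticForm K W) (a : Dual K W) (f x : W) :
    Q (deltaMap a f x) = Q x + a x * (polar Q f x + a x * Q f) := by
  rw [deltaMap_apply, QuadraticMap.map_add Q, QuadraticMap.map_smul, polar_smul_right, polar_comm]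
  simp only [smul_eq_mul]
  ring

lemma deltaMap_isometry_iff (Q : QuadraticForm K W) (a : Dual K W) (f : W) :
    (∀ x, Q (deltaMap a f x) = Q x) ↔ ∀ x, a x * (polar Q f x + a x * Q f) = 0 :=
  forall_congr' fun x => by rw [map_deltaMap_apply, add_eq_left]

lemma deltaSet_subset_orthSet {Q : QuadraticForm K W} {f : W} (hD : Q.polarBilin f = 0)
    (hQ : Q f = 0) : deltaSet f ⊆ orthSet Q := by
  rintro _ ⟨a, ha, rfl⟩
  refine ⟨deltaMap_bijective ha, (deltaMap_isometry_iff Q a f).mpr fun x => ?_⟩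
  rw [← polarBilin_apply_apply, hD, hQ]
  simp

/-- The functional `c*` with `ξ_r = δ_{c*,r}`. -/
noncomputable def xiDual (Q : QuadraticForm K W) (r : W) : Dual K W :=
  -(Q r)⁻¹ • Q.polarBilin r

lemma xiDual_apply (Q : QuadraticForm K W) (r x : W) :
    xiDual Q r x = -(Q r)⁻¹ * polar Q r x := rfl

lemma xiDual_self {Q : QuadraticForm K W} {r : W} (hr : Q r ≠ 0) : xiDual Q r r = -2 := by
  rw [xiDual_apply, polar_self, nsmul_eq_mul, Nat.cast_ofNat]
  field_simp

lemma xiDual_ne_zero {Q : QuadraticForm K W} {r : W} (hr : Q r ≠ 0)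
    (hD : Q.polarBilin r ≠ 0) : xiDual Q r ≠ 0 :=
  smul_ne_zero (neg_ne_zero.mpr (inv_ne_zero hr)) hD

lemma xiMap_eq_deltaMap (Q : QuadraticForm K W) (r : W) : xiMap Q r = deltaMap (xiDual Q r) r := by
  ext x
  simp only [xiMap, LinearMap.sub_apply, LinearMap.smul_apply, LinearMap.smulRight_apply,
    polarBilin_apply_apply, deltaMap_apply, xiDual_apply, LinearMap.id_apply]
  module

lemma xiMap_mem_orthSet {Q : QuadraticForm K W} {r : W} (hr : Q r ≠ 0) :
    xiMap Q r ∈ orthSet Q := by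
  have h2 : xiDual Q r r ≠ -1 := by
    rw [xiDual_self hr]
    intro h
    exact one_ne_zero (by linear_combination -h : (1 : K) = 0)
  rw [xiMap_eq_deltaMap]
  refine ⟨deltaMap_bijective h2, (deltaMap_isometry_iff Q _ r).mpr fun x => ?_⟩
  rw [xiDual_apply]
  field_simp
  ring

lemma xiMap_mem_wOrthSet {Q : QuadraticForm K W} {r : W} (hr : Q r ≠ 0) :
    xiMap Q r ∈ wOrthSet Q := by
  obtain ⟨hbij, hiso⟩ := xiMap_mem_orthSet hr
  refine ⟨hbij, hiso, fun x hx => ?_⟩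
  rw [xiMap_eq_deltaMap, deltaMap_apply, xiDual_apply, polar_comm, ← polarBilin_apply_apply,
    LinearMap.mem_ker.mp hx]
  simp

lemma eq_zero_or_eq_xiDual {Q : QuadraticForm K W} {f : W} (hf : Q f ≠ 0) {a : Dual K W}
    (hiso : ∀ x, Q (deltaMap a f x) = Q x) : a = 0 ∨ a = xiDual Q f := by
  refine (LinearMap.eq_zero_or_eq_zero_of_forall_mul_eq_zero fun x => ?_).imp id sub_eq_zero.mp
  have hx := (deltaMap_isometry_iff Q a f).mp hiso x
  rw [LinearMap.sub_apply, xiDual_apply]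
  field_simp
  linear_combination hx

lemma polarBilin_ne_zero {Q : QuadraticForm K W} (hrad : LinearMap.ker Q.polarBilin = ⊥) {v : W}
    (hv : v ≠ 0) : Q.polarBilin v ≠ 0 :=
  fun h => hv (by simpa [hrad] using LinearMap.mem_ker.mpr h)

lemma eq_zero_of_forall_map_eq_zero {Q : QuadraticForm K W}
    (hrad : LinearMap.ker Q.polarBilin = ⊥) (hQ : ∀ x, Q x = 0) (v : W) : v = 0 := by
  by_contra hv
  apply polarBilin_ne_zero hrad hv
  ext x
  simp [polar, hQ]

lemma map_apply_eq_of_mem_orthSet {Q₁ Q₂ : QuadraticForm K W}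
    (h : orthSet Q₁ = orthSet Q₂ ∨ orthSet Q₁ = wOrthSet Q₂) (φ : W →ₗ[K] W)
    (hφ : φ ∈ orthSet Q₁) (x : W) : Q₂ (φ x) = Q₂ x := by
  rcases h with h | h
  · exact (h ▸ hφ).2 x
  · exact (h ▸ hφ).2.1 x

lemma xiMap_mem_orthSet_of_eq {Q₁ Q₂ : QuadraticForm K W}
    (h : orthSet Q₁ = orthSet Q₂ ∨ orthSet Q₁ = wOrthSet Q₂) {v : W} (hv : Q₂ v ≠ 0) :
    xiMap Q₂ v ∈ orthSet Q₁ := by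
  rcases h with h | h
  · exact h ▸ xiMap_mem_orthSet hv
  · exact h ▸ xiMap_mem_wOrthSet hv

lemma polarBilin_eq_smul_of_map_ne_zero {Q₁ Q₂ : QuadraticForm K W}
    (hrad : LinearMap.ker Q₁.polarBilin = ⊥) (hG : ∀ φ ∈ orthSet Q₁, ∀ x, Q₂ (φ x) = Q₂ x)
    {f : W} (hf : Q₁ f ≠ 0) : Q₂.polarBilin f = (Q₂ f / Q₁ f) • Q₁.polarBilin f := by
  have hf0 : f ≠ 0 := by rintro rfl; exact hf (QuadraticMap.map_zero Q₁)
  have hiso := (deltaMap_isometry_iff Q₂ _ f).mp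
    (xiMap_eq_deltaMap Q₁ f ▸ hG _ (xiMap_mem_orthSet hf))
  obtain h | h := LinearMap.eq_zero_or_eq_zero_of_forall_mul_eq_zero
    (a := xiDual Q₁ f) (c := Q₂.polarBilin f + Q₂ f • xiDual Q₁ f) fun x => by
      rw [LinearMap.add_apply, LinearMap.smul_apply, polarBilin_apply_apply, smul_eq_mul]
      linear_combination hiso x
  · exact absurd h (xiDual_ne_zero hf (polarBilin_ne_zero hrad hf0))
  · ext x
    have hx := LinearMap.congr_fun h x
    simp only [LinearMap.add_apply, LinearMap.smul_apply, polarBilin_apply_apply, smul_eq_mul,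
      xiDual_apply, LinearMap.zero_apply] at hx ⊢
    field_simp at hx ⊢
    linear_combination hx

lemma polar_eq_zero_of_polarBilin_eq_zero {Q₁ Q₂ : QuadraticForm K W}
    (hrad : LinearMap.ker Q₁.polarBilin = ⊥) (hG : ∀ φ ∈ orthSet Q₁, ∀ x, Q₂ (φ x) = Q₂ x)
    {w g : W} (hw : Q₂.polarBilin w = 0) (hg : Q₁ g ≠ 0) (hg₂ : Q₂ g ≠ 0) :
    polar Q₁ w g = 0 := by
  have h := LinearMap.congr_fun (polarBilin_eq_smul_of_map_ne_zero hrad hG hg) w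
  rw [polarBilin_apply_apply, polar_comm, ← polarBilin_apply_apply, hw] at h
  simp only [LinearMap.zero_apply, LinearMap.smul_apply, polarBilin_apply_apply, smul_eq_mul] at h
  rw [polar_comm]
  exact (mul_eq_zero.mp h.symm).resolve_left (div_ne_zero hg₂ hg)

lemma div_eq_div_of_map_add_ne_zero {Q₁ Q₂ : QuadraticForm K W}
    (hrad : LinearMap.ker Q₁.polarBilin = ⊥)
    (hG : ∀ φ ∈ orthSet Q₁, ∀ x, Q₂ (φ x) = Q₂ x) {p q : W} (hp : Q₁ p ≠ 0) (hq : Q₁ q ≠ 0)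
    (hpq : Q₁ (p + q) ≠ 0) : Q₂ p / Q₁ p = Q₂ q / Q₁ q := by
  have hsum := polarBilin_eq_smul_of_map_ne_zero hrad hG hpq
  rw [map_add Q₂.polarBilin, map_add Q₁.polarBilin, polarBilin_eq_smul_of_map_ne_zero hrad hG hp,
    polarBilin_eq_smul_of_map_ne_zero hrad hG hq] at hsum
  set α := Q₂ p / Q₁ p
  set β := Q₂ q / Q₁ q
  set γ := Q₂ (p + q) / Q₁ (p + q)
  have hzero : (γ - α) • p + (γ - β) • q = 0 := by
    refine LinearMap.ker_eq_bot.mp hrad ?_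
    rw [map_zero, map_add, map_smul, map_smul]
    linear_combination (norm := module) -hsum
  rcases eq_or_ne (γ - β) 0 with hβ | hβ
  · rw [hβ, zero_smul, add_zero, smul_eq_zero] at hzero
    have hp0 : p ≠ 0 := by rintro rfl; exact hp (QuadraticMap.map_zero Q₁)
    linear_combination hβ - hzero.resolve_right hp0
  -- otherwise `q` is a multiple of `p`, and the ratio is homogeneous
  obtain ⟨c, rfl⟩ : ∃ c : K, c • p = q :=
    ⟨-(γ - β)⁻¹ * (γ - α), by
      rw [mul_smul, neg_smul, ← smul_neg, ← eq_neg_of_add_eq_zero_right hzero, inv_smul_smul₀ hβ]⟩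
  have hc : c ≠ 0 := by rintro rfl; simp at hq
  simp only [α, β, QuadraticMap.map_smul, smul_eq_mul]
  field_simp

lemma mk_eq_two_of_forall_eq_zero_or_eq_one (hF : ∀ t : K, t = 0 ∨ t = 1) :
    Cardinal.mk K = 2 :=
  Cardinal.mk_eq_two_iff.mpr ⟨0, 1, zero_ne_one,
    Set.eq_univ_of_forall fun t => by rcases hF t with rfl | rfl <;> simp⟩

lemma mk_eq_three_of_forall_eq_zero_or_eq_one_or (h2 : (2 : K) ≠ 0)
    (hF : ∀ t : K, t = 0 ∨ t = 1 ∨ 2 * t = 1) : Cardinal.mk K = 3 := by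
  classical
  have hhalf : (2 : K)⁻¹ ≠ 1 := fun h =>
    one_ne_zero (by linear_combination inv_eq_one.mp h : (1 : K) = 0)
  refine Cardinal.mk_eq_nat_iff_finset.mpr ⟨{0, 1, 2⁻¹}, ?_,
    Finset.card_eq_three.mpr ⟨0, 1, 2⁻¹, zero_ne_one, (inv_ne_zero h2).symm, hhalf.symm, rfl⟩⟩
  refine Set.eq_univ_of_forall fun t => ?_
  rcases hF t with rfl | rfl | ht
  · simp
  · simp
  · simp [eq_inv_of_mul_eq_one_right ht]

lemma finrank_ne_one_of_two_eq_zero {Q : QuadraticForm K W}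
    (hrad : LinearMap.ker Q.polarBilin = ⊥) (h2 : (2 : K) = 0) : finrank K W ≠ 1 := by
  intro h1
  obtain ⟨f, hf, hspan⟩ := finrank_eq_one_iff'.mp h1
  apply polarBilin_ne_zero hrad hf
  ext x
  obtain ⟨c, rfl⟩ := hspan x
  simp [polar_self, h2]

lemma finrank_eq_zero_of_finrank_le_two {Q : QuadraticForm K W}
    (hrad : LinearMap.ker Q.polarBilin = ⊥) (h2 : ¬(finrank K W = 2 ∧ Cardinal.mk K = 2))
    (hF : ∀ t : K, t = 0 ∨ t = 1) (hle : finrank K W ≤ 2) : finrank K W = 0 := by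
  have hchar : (2 : K) = 0 :=
    (hF 2).resolve_right fun h => one_ne_zero (by linear_combination h : (1 : K) = 0)
  have hne1 := finrank_ne_one_of_two_eq_zero hrad hchar
  have hne2 : finrank K W ≠ 2 := fun h => h2 ⟨h, mk_eq_two_of_forall_eq_zero_or_eq_one hF⟩
  omega

lemma finrank_le_finrank_ker_add_one [FiniteDimensional K W] (φ : W →ₗ[K] K) :
    finrank K W ≤ finrank K (LinearMap.ker φ) + 1 := by
  have hsum := LinearMap.finrank_range_add_finrank_ker φ
  have hrange := (LinearMap.range φ).finrank_le
  rw [finrank_self] at hrange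
  omega

lemma map_eq_zero_of_forall_apply_ne_zero {Q : QuadraticForm K W} {a : Dual K W} (ha0 : a ≠ 0)
    (hoff : ∀ x, a x ≠ 0 → Q x = 0) {c : K} (hc0 : c ≠ 0) (hc1 : c ≠ 1) (y : W) : Q y = 0 := by
  obtain ⟨u, hu⟩ : ∃ u, a u ≠ 0 := by simpa [LinearMap.ext_iff] using ha0
  rcases ne_or_eq (a y) 0 with hy | hy
  · exact hoff y hy
  -- `Q (t • u + y) = 0` for all `t ≠ 0`, and `Q u = 0`: a linear polynomial in `t` with two roots
  have hline : ∀ t : K, t ≠ 0 → Q y + t * polar Q u y = 0 := fun t ht => by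
    have h0 := hoff (t • u + y) (by simp [hy, ht, hu])
    rw [QuadraticMap.map_add Q, QuadraticMap.map_smul, hoff u hu, polar_smul_left] at h0
    simpa using h0
  have hp : polar Q u y = 0 := by
    have h : (1 - c) * polar Q u y = 0 := by linear_combination hline 1 one_ne_zero - hline c hc0
    exact (mul_eq_zero.mp h).resolve_left (sub_ne_zero.mpr hc1.symm)
  simpa [hp] using hline 1 one_ne_zero

lemma finrank_ker_le_one_of_forall_apply_ne_zero {Q : QuadraticForm K W}
    (hrad : LinearMap.ker Q.polarBilin = ⊥) (hF : ∀ t : K, t = 0 ∨ t = 1) {a : Dual K W}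
    (ha0 : a ≠ 0) (hoff : ∀ x, a x ≠ 0 → Q x = 0) : finrank K (LinearMap.ker a) ≤ 1 := by
  have hchar : (2 : K) = 0 :=
    (hF 2).resolve_right fun h => one_ne_zero (by linear_combination h : (1 : K) = 0)
  have hpolar : ∀ u y, a u ≠ 0 → a y = 0 → polar Q u y = Q y := fun u y hu hy => by
    have h0 := hoff (u + y) (by simpa [hy] using hu)
    rw [QuadraticMap.map_add Q, hoff u hu] at h0
    linear_combination h0 - Q y * hchar
  obtain ⟨u, hu⟩ : ∃ u, a u ≠ 0 := by simpa [LinearMap.ext_iff] using ha0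
  have hD : ∀ y, a y = 0 → Q.polarBilin y = Q y • a := fun y hy => by
    ext x
    simp only [polarBilin_apply_apply, LinearMap.smul_apply, smul_eq_mul]
    rcases hF (a x) with hx | hx
    · have hux := hpolar (u + x) y (by simpa [hx] using hu) hy
      rw [polar_add_left, hpolar u y hu hy] at hux
      rw [polar_comm, hx]
      linear_combination hux
    · rw [polar_comm, hpolar x y (by simp [hx]) hy, hx, mul_one]
  have hinj : Function.Injective (Q.polarBilin ∘ₗ (LinearMap.ker a).subtype) :=
    (LinearMap.ker_eq_bot.mp hrad).comp Subtype.val_injective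
  have hrange : LinearMap.range (Q.polarBilin ∘ₗ (LinearMap.ker a).subtype) ≤ K ∙ a := by
    rintro _ ⟨⟨y, hy⟩, rfl⟩
    simp only [LinearMap.coe_comp, Function.comp_apply, Submodule.coe_subtype]
    rw [hD y hy]
    exact Submodule.smul_mem _ _ (Submodule.mem_span_singleton_self a)
  calc finrank K (LinearMap.ker a)
      = finrank K (LinearMap.range (Q.polarBilin ∘ₗ (LinearMap.ker a).subtype)) :=
        (LinearMap.finrank_range_of_inj hinj).symm
    _ ≤ finrank K (K ∙ a) := Submodule.finrank_mono hrange
    _ = 1 := finrank_span_singleton ha0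

end

theorem span_setOf_map_ne_zero_eq_top {Q : QuadraticForm F V}
    (hrad : LinearMap.ker Q.polarBilin = ⊥) (h2 : ¬(finrank F V = 2 ∧ Cardinal.mk F = 2)) :
    Submodule.span F {v | Q v ≠ 0} = ⊤ := by
  by_contra hne
  obtain ⟨a, ha0, hle⟩ := Submodule.exists_le_ker_of_lt_top _ (lt_top_iff_ne_top.mpr hne)
  have hoff : ∀ x, a x ≠ 0 → Q x = 0 := fun x hx =>
    by_contra fun hQ => hx (hle (Submodule.subset_span hQ))
  apply ha0
  by_cases hF : ∀ t : F, t = 0 ∨ t = 1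
  · have hker := finrank_ker_le_one_of_forall_apply_ne_zero hrad hF ha0 hoff
    have h0 := finrank_eq_zero_of_finrank_le_two hrad h2 hF
      ((finrank_le_finrank_ker_add_one a).trans (by omega))
    ext v
    simp [finrank_zero_iff_forall_zero.mp h0 v]
  · obtain ⟨c, hc0, hc1⟩ : ∃ c : F, c ≠ 0 ∧ c ≠ 1 := by simpa [not_or] using hF
    ext v
    simp [eq_zero_of_forall_map_eq_zero hrad
      (map_eq_zero_of_forall_apply_ne_zero ha0 hoff hc0 hc1) v]

lemma eq_zero_of_forall_polar_eq_zero {Q : QuadraticForm F V}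
    (hrad : LinearMap.ker Q.polarBilin = ⊥) (h2 : ¬(finrank F V = 2 ∧ Cardinal.mk F = 2))
    {v : V} (hv : ∀ g, Q g ≠ 0 → polar Q v g = 0) : v = 0 := by
  by_contra hv0
  exact polarBilin_ne_zero hrad hv0
    (LinearMap.ext_on (span_setOf_map_ne_zero_eq_top hrad h2) fun g hg => hv g hg)

theorem not_deltaSet_subset_orthSet {Q : QuadraticForm F V}
    (hrad : LinearMap.ker Q.polarBilin = ⊥) (h1 : ¬(finrank F V = 1 ∧ Cardinal.mk F = 3))
    (h2 : ¬(finrank F V = 2 ∧ Cardinal.mk F = 2)) {f : V} (hf : Q f ≠ 0) :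
    ¬deltaSet f ⊆ orthSet Q := by
  intro hsub
  have hf0 : f ≠ 0 := by rintro rfl; exact hf (QuadraticMap.map_zero Q)
  have hr0 := xiDual_ne_zero hf (polarBilin_ne_zero hrad hf0)
  have hS : ∀ a : Dual F V, a f ≠ -1 → a = 0 ∨ a = xiDual Q f := fun a ha =>
    eq_zero_or_eq_xiDual hf (hsub ⟨a, ha, rfl⟩).2
  -- `δ_{t ξ, f}` with `ξ = xiDual Q f` pins down the scalars
  have hscalar : ∀ t : F, 2 * t ≠ 1 → t = 0 ∨ t = 1 := fun t ht => by
    refine (hS (t • xiDual Q f) ?_).imp (fun h => (smul_eq_zero.mp h).resolve_right hr0)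
      fun h => smul_left_injective F hr0 (h.trans (one_smul F _).symm)
    rw [LinearMap.smul_apply, xiDual_self hf, smul_eq_mul]
    exact fun h => ht (by linear_combination -h)
  -- `δ_{b, f}` with `b f = 0` pins down the dimension
  have hker : ∀ b ∈ LinearMap.ker (Dual.eval F V f), b = 0 ∨ b = xiDual Q f := fun b hb =>
    hS b (by rw [← Dual.eval_apply, LinearMap.mem_ker.mp hb]; simp)
  have hdim : finrank F V ≤ finrank F (LinearMap.ker (Dual.eval F V f)) + 1 := by
    simpa [Subspace.dual_finrank_eq] using finrank_le_finrank_ker_add_one (Dual.eval F V f)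
  have hpos : 0 < finrank F V := Module.finrank_pos_iff_exists_ne_zero.mpr ⟨f, hf0⟩
  by_cases hchar : (2 : F) = 0
  · have hF : ∀ t : F, t = 0 ∨ t = 1 := fun t => hscalar t (by simp [hchar])
    have hle : LinearMap.ker (Dual.eval F V f) ≤ F ∙ xiDual Q f := fun b hb => by
      rcases hker b hb with rfl | rfl
      · exact Submodule.zero_mem _
      · exact Submodule.mem_span_singleton_self _
    have hK := (Submodule.finrank_mono hle).trans (finrank_span_singleton hr0).le
    have := finrank_eq_zero_of_finrank_le_two hrad h2 hF (by omega)
    omega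
  · have hK : LinearMap.ker (Dual.eval F V f) = ⊥ := (Submodule.eq_bot_iff _).mpr fun b hb =>
      (hker b hb).resolve_right fun hb' => hchar (by
        rw [hb', LinearMap.mem_ker, Dual.eval_apply, xiDual_self hf] at hb
        linear_combination -hb)
    have hF : ∀ t : F, t = 0 ∨ t = 1 ∨ 2 * t = 1 := fun t =>
      (em (2 * t = 1)).elim (fun h => .inr (.inr h)) fun h => (hscalar t h).imp id .inl
    rw [hK, finrank_bot] at hdim
    exact h1 ⟨by omega, mk_eq_three_of_forall_eq_zero_or_eq_one_or hchar hF⟩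

section

variable {Q₁ Q₂ : QuadraticForm F V}

theorem map_ne_zero_of_map_ne_zero (hrad : LinearMap.ker Q₁.polarBilin = ⊥)
    (h1 : ¬(finrank F V = 1 ∧ Cardinal.mk F = 3)) (h2 : ¬(finrank F V = 2 ∧ Cardinal.mk F = 2))
    (h : orthSet Q₁ = orthSet Q₂ ∨ orthSet Q₁ = wOrthSet Q₂) {f : V} (hf : Q₁ f ≠ 0) :
    Q₂ f ≠ 0 := by
  intro hf₂
  have hG := map_apply_eq_of_mem_orthSet h
  have hD₂ : Q₂.polarBilin f = 0 := by
    simpa [hf₂] using polarBilin_eq_smul_of_map_ne_zero hrad hG hf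
  rcases h with hO | hO'
  · exact not_deltaSet_subset_orthSet hrad h1 h2 hf (hO ▸ deltaSet_subset_orthSet hD₂ hf₂)
  have hf0 : f ≠ 0 := by rintro rfl; exact hf (QuadraticMap.map_zero Q₁)
  refine hf0 (eq_zero_of_forall_polar_eq_zero hrad h2 fun g hg => ?_)
  rcases ne_or_eq (Q₂ g) 0 with hg₂ | hg₂
  · exact polar_eq_zero_of_polarBilin_eq_zero hrad hG hD₂ hg hg₂
  -- otherwise `g` lies in the radical of `Q₂`, which `ξ_f ∈ O'(V,Q₂)` fixes
  have hgrad : g ∈ LinearMap.ker Q₂.polarBilin := by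
    simpa [hg₂] using polarBilin_eq_smul_of_map_ne_zero hrad hG hg
  have hfix := (hO' ▸ xiMap_mem_orthSet hf).2.2 g hgrad
  rw [xiMap_eq_deltaMap, deltaMap_apply, add_eq_left, smul_eq_zero, xiDual_apply] at hfix
  simpa [hf, hf0] using hfix

theorem map_eq_zero_of_map_eq_zero (hrad : LinearMap.ker Q₁.polarBilin = ⊥)
    (h1 : ¬(finrank F V = 1 ∧ Cardinal.mk F = 3)) (h2 : ¬(finrank F V = 2 ∧ Cardinal.mk F = 2))
    (h : orthSet Q₁ = orthSet Q₂ ∨ orthSet Q₁ = wOrthSet Q₂) {v : V} (hv : Q₁ v = 0) :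
    Q₂ v = 0 := by
  by_contra hv₂
  have hv0 : v ≠ 0 := by rintro rfl; exact hv₂ (QuadraticMap.map_zero Q₂)
  rcases eq_or_ne (Q₂.polarBilin v) 0 with hD₂ | hD₂
  · exact hv0 (eq_zero_of_forall_polar_eq_zero hrad h2 fun g hg =>
      polar_eq_zero_of_polarBilin_eq_zero hrad (map_apply_eq_of_mem_orthSet h) hD₂ hg
        (map_ne_zero_of_map_ne_zero hrad h1 h2 h hg))
  have hiso := (deltaMap_isometry_iff Q₁ _ v).mp
    (xiMap_eq_deltaMap Q₂ v ▸ (xiMap_mem_orthSet_of_eq h hv₂).2)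
  obtain h0 | h0 := LinearMap.eq_zero_or_eq_zero_of_forall_mul_eq_zero
    (a := xiDual Q₂ v) (c := Q₁.polarBilin v) fun x => by simpa [hv] using hiso x
  · exact xiDual_ne_zero hv₂ hD₂ h0
  · exact polarBilin_ne_zero hrad hv0 h0

theorem div_eq_div_of_map_ne_zero (hrad : LinearMap.ker Q₁.polarBilin = ⊥)
    (h1 : ¬(finrank F V = 1 ∧ Cardinal.mk F = 3)) (h2 : ¬(finrank F V = 2 ∧ Cardinal.mk F = 2))
    (h : orthSet Q₁ = orthSet Q₂ ∨ orthSet Q₁ = wOrthSet Q₂) {p q : V} (hp : Q₁ p ≠ 0)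
    (hq : Q₁ q ≠ 0) : Q₂ p / Q₁ p = Q₂ q / Q₁ q := by
  have hG := map_apply_eq_of_mem_orthSet h
  rcases ne_or_eq (Q₁ (p + q)) 0 with hpq | hpq
  · exact div_eq_div_of_map_add_ne_zero hrad hG hp hq hpq
  have hpq₂ := map_eq_zero_of_map_eq_zero hrad h1 h2 h hpq
  have hB : polar Q₂ p q = Q₂ p / Q₁ p * polar Q₁ p q := by
    simpa using LinearMap.congr_fun (polarBilin_eq_smul_of_map_ne_zero hrad hG hp) q
  rw [QuadraticMap.map_add Q₁] at hpq
  rw [QuadraticMap.map_add Q₂, hB] at hpq₂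
  field_simp at hpq₂ ⊢
  linear_combination Q₂ p * hpq - hpq₂

end

theorem stmt8 (Q₁ Q₂ : QuadraticForm F V)
    (hrad : LinearMap.ker Q₁.polarBilin = ⊥)
    (h1 : ¬(Module.finrank F V = 1 ∧ Cardinal.mk F = 3))
    (h2 : ¬(Module.finrank F V = 2 ∧ Cardinal.mk F = 2))
    (h : orthSet Q₁ = orthSet Q₂ ∨ orthSet Q₁ = wOrthSet Q₂) :
    ∃ c : F, c ≠ 0 ∧ Q₁ = c • Q₂ := by
  have hisotropic := fun x => map_eq_zero_of_map_eq_zero hrad h1 h2 h (v := x)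
  by_cases hex : ∃ f, Q₁ f ≠ 0
  · obtain ⟨f, hf⟩ := hex
    have hf₂ := map_ne_zero_of_map_ne_zero hrad h1 h2 h hf
    refine ⟨Q₁ f / Q₂ f, div_ne_zero hf hf₂, QuadraticMap.ext fun x => ?_⟩
    rw [smul_apply, smul_eq_mul]
    rcases eq_or_ne (Q₁ x) 0 with hx | hx
    · rw [hx, hisotropic x hx, mul_zero]
    · have hratio := div_eq_div_of_map_ne_zero hrad h1 h2 h hx hf
      field_simp at hratio ⊢
      linear_combination -hratio
  · push Not at hex
    exact ⟨1, one_ne_zero, QuadraticMap.ext fun x => by simp [hex x, hisotropic x (hex x)]⟩
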